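/- Let μ ≠ 0, ε = ±1 with εμ < 0, set s = √(−εμ), and let k₁, k₂, k₃, k₄ ∈ ℝ. Define on ℝ³ the vector field X = (X₁, X₂, X₃) with X₁ = (1/μ)(k₁e^{sx₁} + k₂e^{−sx₁} + k₃), X₂ = −(1/μ²)(k₁(μsx₂ − ε)e^{sx₁} − k₂(μsx₂ + ε)e^{−sx₁}) + k₄e^{−μx₃}, X₃ = (s/μ²)(k₁e^{sx₁} − k₂e^{−sx₁}) − μ/2. Then, for the metric g with components g₁₁ = (ε/μ)(e^{−2μx₃} − 1), g₁₂ = 1, g₁₃ = μx₂, g₃₃ = 1, and its Ricci tensor ρ (ρ₁₁ = −½εμ(3e^{−2μx₃} − 1), ρ₁₂ = −½μ², ρ₁₃ = −½μ³x₂, ρ₃₃ = −½μ², other entries 0), the Lie derivative satisfies (ℒ_X g)_{ij} + ρ_{ij} = −½μ²·g_{ij} for all i, j ∈ {1,2,3} at every point of ℝ³. -/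

import Mathlib

/-- A point of `ℝ³`. -/
abbrev Pt := Fin 3 → ℝ

/-- Partial derivative `∂ᵢ f` of a scalar function on `ℝ³`. -/
noncomputable def pder (i : Fin 3) (f : Pt → ℝ) (p : Pt) : ℝ :=
  fderiv ℝ f p (Pi.single i 1)

/-- The matrix of the metric `g` at a point `p = (x₁,x₂,x₃)`. -/
noncomputable def gMat (μ ε : ℝ) (p : Pt) : Matrix (Fin 3) (Fin 3) ℝ :=
  ![![(ε/μ) * (Real.exp (-(2*μ*p 2)) - 1), 1, μ * p 1],
    ![1, 0, 0],
    ![μ * p 1, 0, 1]]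

/-- The Ricci tensor of `g`. -/
noncomputable def RicciExp (μ ε : ℝ) (p : Pt) : Matrix (Fin 3) (Fin 3) ℝ :=
  ![![-(1/2) * ε * μ * (3 * Real.exp (-(2*μ*p 2)) - 1), -(1/2) * μ^2, -(1/2) * μ^3 * p 1],
    ![-(1/2) * μ^2, 0, 0],
    ![-(1/2) * μ^3 * p 1, 0, -(1/2) * μ^2]]

/-- The components of the Lie derivative of `g` along `X`:
`(ℒ_X g)_{ij} = X^k∂_k g_{ij} + g_{kj}∂_i X^k + g_{ik}∂_j X^k` (sum over `k`). -/
noncomputable def lieDeriv (μ ε : ℝ) (X : Pt → Pt) (i j : Fin 3) (p : Pt) : ℝ :=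
  ∑ k : Fin 3, (X p k * pder k (fun q => gMat μ ε q i j) p
    + gMat μ ε p k j * pder i (fun q => X q k) p
    + gMat μ ε p i k * pder j (fun q => X q k) p)

/-- The soliton vector field in the case `εμ < 0`, with `s = √(−εμ)`. -/
noncomputable def solitonX (μ ε k₁ k₂ k₃ k₄ : ℝ) : Pt → Pt := fun p =>
  let s := Real.sqrt (-(ε*μ))
  ![(1/μ) * (k₁ * Real.exp (s * p 0) + k₂ * Real.exp (-(s * p 0)) + k₃),
    -(1/μ^2) * (k₁ * (μ * s * p 1 - ε) * Real.exp (s * p 0)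
      - k₂ * (μ * s * p 1 + ε) * Real.exp (-(s * p 0))) + k₄ * Real.exp (-(μ * p 2)),
    (s/μ^2) * (k₁ * Real.exp (s * p 0) - k₂ * Real.exp (-(s * p 0))) - μ/2]

/-!
The field `X` is built so that `ℒ_X g = εμ e^{-2μx₃} dx₁ ⊗ dx₁`: every term carrying one of the
constants `kᵢ` cancels, identically except in the `(1,3)` component, where the cancellation is
`s² = -εμ`. Adding `ρ` then leaves `-½μ² g` entry by entry.
-/

section PartialDerivative

variable {f g : Pt → ℝ} {p : Pt} (i : Fin 3)

theorem pder_const (c : ℝ) : pder i (fun _ => c) p = 0 := by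
  simp [pder]

theorem pder_coord (j : Fin 3) : pder i (fun q => q j) p = if i = j then 1 else 0 := by
  simp [pder, (hasFDerivAt_apply j p).fderiv, Pi.single_apply, eq_comm]

theorem pder_add (hf : DifferentiableAt ℝ f p) (hg : DifferentiableAt ℝ g p) :
    pder i (fun q => f q + g q) p = pder i f p + pder i g p := by
  simp [pder, fderiv_fun_add hf hg]

theorem pder_sub (hf : DifferentiableAt ℝ f p) (hg : DifferentiableAt ℝ g p) :
    pder i (fun q => f q - g q) p = pder i f p - pder i g p := by
  simp [pder, fderiv_fun_sub hf hg]

theorem pder_mul (hf : DifferentiableAt ℝ f p) (hg : DifferentiableAt ℝ g p) :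
    pder i (fun q => f q * g q) p = f p * pder i g p + g p * pder i f p := by
  simp [pder, fderiv_fun_mul hf hg]

theorem pder_neg : pder i (fun q => -f q) p = -pder i f p := by
  simp [pder, fderiv_fun_neg]

theorem pder_exp (hf : DifferentiableAt ℝ f p) :
    pder i (fun q => Real.exp (f q)) p = Real.exp (f p) * pder i f p := by
  simp [pder, fderiv_exp hf]

end PartialDerivative

noncomputable def solitonJacobian (μ ε k₁ k₂ k₄ : ℝ) (p : Pt) : Matrix (Fin 3) (Fin 3) ℝ :=
  let s := Real.sqrt (-(ε*μ))
  let E := Real.exp (s * p 0)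
  let F := Real.exp (-(s * p 0))
  ![![(s/μ) * (k₁ * E - k₂ * F), 0, 0],
    ![-(s/μ^2) * (k₁ * (μ * s * p 1 - ε) * E + k₂ * (μ * s * p 1 + ε) * F),
      -(s/μ) * (k₁ * E - k₂ * F), -(μ * k₄ * Real.exp (-(μ * p 2)))],
    ![(s/μ)^2 * (k₁ * E + k₂ * F), 0, 0]]

theorem pder_solitonX {μ : ℝ} (hμ : μ ≠ 0) (ε k₁ k₂ k₃ k₄ : ℝ) (p : Pt) (i j : Fin 3) :
    pder j (fun q => solitonX μ ε k₁ k₂ k₃ k₄ q i) p = solitonJacobian μ ε k₁ k₂ k₄ p i j := by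
  fin_cases i <;> fin_cases j <;>
    simp only [solitonX, solitonJacobian, Fin.zero_eta, Fin.mk_one, Fin.reduceFinMk,
      Matrix.cons_val_zero, Matrix.cons_val_one, Matrix.cons_val_two, Matrix.head_cons,
      Matrix.tail_cons] <;>
    simp (disch := fun_prop) only [pder_add, pder_sub, pder_mul, pder_neg, pder_exp, pder_const,
      pder_coord] <;>
    grind

noncomputable def gMatPartial (μ ε : ℝ) (p : Pt) (k : Fin 3) : Matrix (Fin 3) (Fin 3) ℝ :=
  ![![if k = 2 then -(2 * ε * Real.exp (-(2*μ*p 2))) else 0, 0, if k = 1 then μ else 0],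
    ![0, 0, 0],
    ![if k = 1 then μ else 0, 0, 0]]

theorem pder_gMat {μ : ℝ} (hμ : μ ≠ 0) (ε : ℝ) (p : Pt) (k i j : Fin 3) :
    pder k (fun q => gMat μ ε q i j) p = gMatPartial μ ε p k i j := by
  fin_cases i <;> fin_cases j <;>
    simp only [gMat, gMatPartial, Fin.zero_eta, Fin.mk_one, Fin.reduceFinMk,
      Matrix.cons_val_zero, Matrix.cons_val_one, Matrix.cons_val_two, Matrix.head_cons,
      Matrix.tail_cons] <;>
    simp (disch := fun_prop) only [pder_sub, pder_mul, pder_neg, pder_exp, pder_const,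
      pder_coord] <;>
    grind

theorem lieDeriv_solitonX {μ ε : ℝ} (hμ : μ ≠ 0) (hεμ : ε * μ ≤ 0) (k₁ k₂ k₃ k₄ : ℝ) (p : Pt)
    (i j : Fin 3) :
    lieDeriv μ ε (solitonX μ ε k₁ k₂ k₃ k₄) i j p =
      Matrix.single 0 0 (ε * μ * Real.exp (-(2*μ*p 2))) i j := by
  have hs : √(-(ε * μ)) ^ 2 = -(ε * μ) := Real.sq_sqrt (by linarith)
  simp only [lieDeriv, Fin.sum_univ_three, pder_solitonX hμ, pder_gMat hμ]
  fin_cases i <;> fin_cases j <;>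
    simp only [solitonX, solitonJacobian, gMatPartial, gMat, Matrix.single_apply, Fin.zero_eta,
      Fin.mk_one, Fin.reduceFinMk, Matrix.cons_val_zero, Matrix.cons_val_one, Matrix.cons_val_two,
      Matrix.head_cons, Matrix.tail_cons] <;>
    grind

theorem ricci_soliton_hyperbolic_general (μ ε k₁ k₂ k₃ k₄ : ℝ) (hμ : μ ≠ 0)
    (hεμ : ε * μ < 0) :
    ∀ (p : Pt) (i j : Fin 3),
      lieDeriv μ ε (solitonX μ ε k₁ k₂ k₃ k₄) i j p + RicciExp μ ε p i j =
        -(1/2) * μ^2 * gMat μ ε p i j := by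
  intro p i j
  rw [lieDeriv_solitonX hμ hεμ.le]
  fin_cases i <;> fin_cases j <;>
    simp only [RicciExp, gMat, Matrix.single_apply, Fin.zero_eta, Fin.mk_one, Fin.reduceFinMk,
      Matrix.cons_val_zero, Matrix.cons_val_one, Matrix.cons_val_two, Matrix.head_cons,
      Matrix.tail_cons] <;>
    grind

/-- In the case `εμ < 0`, `(ℝ³, g, X)` is an expanding Ricci soliton with `λ = −½μ²`:
`(ℒ_X g)_{ij} + ρ_{ij} = −½μ²·g_{ij}` everywhere. -/
theorem ricci_soliton_hyperbolic (μ ε k₁ k₂ k₃ k₄ : ℝ) (hμ : μ ≠ 0)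
    (hε : ε = 1 ∨ ε = -1) (hεμ : ε * μ < 0) :
    ∀ (p : Pt) (i j : Fin 3),
      lieDeriv μ ε (solitonX μ ε k₁ k₂ k₃ k₄) i j p + RicciExp μ ε p i j =
        -(1/2) * μ^2 * gMat μ ε p i j :=
  ricci_soliton_hyperbolic_general μ ε k₁ k₂ k₃ k₄ hμ hεμ
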